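/- Let x ∈ L_+ with normal form x = a_1 e_1 + ⋯ + a_n e_n + a c (so a ≥ 0). Then for every integer t ≥ 2, the homogeneous component S_{tx−c} is contained in ∑_{i=1}^n S_{x − a_i e_i} · S_{(t−1)x − (p_i − a_i)e_i}, as ℂ-subspaces of S. -/

import Mathlib

/-!
Write `x = ∑ aᵢ eᵢ + a c`. A monomial of degree `t x - c` becomes, after the substitutions
`xⱼ^{pⱼ} = ℓⱼ`, a product `x^r · G` with `0 ≤ rⱼ < pⱼ` and `G` a binary form in `t₀, t₁` of some
degree `D`. Comparing with the normal form of `t x - c` gives `t a + #F ≤ D + 1`, where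
`F = {j | rⱼ < aⱼ}`. Since the `ℓⱼ` are pairwise non-proportional, partial fractions write `G` as a
sum over `i ∈ F` of `∏_{j ∈ F, j ≠ i} ℓⱼ` times forms of degree `D + 1 - #F ≥ a`. Turning each such
`ℓⱼ` back into `xⱼ^{pⱼ}`, the summand for `i` factors as `∏_{j ≠ i} xⱼ^{aⱼ} · t^a`, of degree
`x - aᵢ eᵢ`, times a rest whose degree is then `(t x - c) - (x - aᵢ eᵢ) = (t - 1) x - (pᵢ - aᵢ) eᵢ`.
-/

noncomputable section

open MvPolynomial

def LRel (ι : Type) [DecidableEq ι] (p : ι → ℕ) : AddSubgroup (Option ι → ℤ) :=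
  AddSubgroup.closure
    { v | ∃ i : ι, v = (p i : ℤ) • Pi.single (some i) 1 - Pi.single (none : Option ι) 1 }

abbrev LGroup (ι : Type) [DecidableEq ι] (p : ι → ℕ) : Type :=
  (Option ι → ℤ) ⧸ LRel ι p

def egen {ι : Type} [DecidableEq ι] (p : ι → ℕ) (i : ι) : LGroup ι p :=
  QuotientAddGroup.mk (Pi.single (some i) 1)

def cgen {ι : Type} [DecidableEq ι] (p : ι → ℕ) : LGroup ι p :=
  QuotientAddGroup.mk (Pi.single (none : Option ι) 1)

def Lplus {ι : Type} [DecidableEq ι] (p : ι → ℕ) : AddSubmonoid (LGroup ι p) :=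
  AddSubmonoid.closure (Set.range (egen p))

abbrev SPoly (ι : Type) : Type := MvPolynomial (ι ⊕ Fin 2) ℂ

def SIdl (ι : Type) (p : ι → ℕ) (c0 c1 : ι → ℂ) : Ideal (SPoly ι) :=
  Ideal.span { f | ∃ i : ι,
    f = X (Sum.inl i) ^ (p i) - (C (c0 i) * X (Sum.inr 0) + C (c1 i) * X (Sum.inr 1)) }

abbrev SAlg (ι : Type) (p : ι → ℕ) (c0 c1 : ι → ℂ) : Type := SPoly ι ⧸ SIdl ι p c0 c1

def wtA {ι : Type} [Fintype ι] [DecidableEq ι] (p : ι → ℕ) (m : (ι ⊕ Fin 2) →₀ ℕ) :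
    LGroup ι p :=
  (∑ i : ι, m (Sum.inl i) • egen p i) + (m (Sum.inr 0) + m (Sum.inr 1)) • cgen p

def polyCompA {ι : Type} [Fintype ι] [DecidableEq ι] (p : ι → ℕ) (y : LGroup ι p) :
    Submodule ℂ (SPoly ι) where
  carrier := { f | ∀ m, coeff m f ≠ 0 → wtA p m = y }
  add_mem' := by
    intro f g hf hg m hm
    by_cases h : coeff m f = 0
    · refine hg m fun h' => hm ?_
      simp [coeff_add, h, h']
    · exact hf m h
  zero_mem' := by
    intro m hm
    simp at hm
  smul_mem' := by
    intro c f hf m hm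
    refine hf m fun h => hm ?_
    simp [coeff_smul, h]

def SCompA {ι : Type} [Fintype ι] [DecidableEq ι] (p : ι → ℕ) (c0 c1 : ι → ℂ)
    (y : LGroup ι p) : Submodule ℂ (SAlg ι p c0 c1) :=
  (polyCompA p y).map (Ideal.Quotient.mkₐ ℂ (SIdl ι p c0 c1)).toLinearMap

def SVerA {ι : Type} [Fintype ι] [DecidableEq ι] (p : ι → ℕ) (c0 c1 : ι → ℂ)
    (x : LGroup ι p) : Submodule ℂ (SAlg ι p c0 c1) :=
  ⨆ k : ℤ, SCompA p c0 c1 (k • x)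

def SShiftA {ι : Type} [Fintype ι] [DecidableEq ι] (p : ι → ℕ) (c0 c1 : ι → ℂ)
    (y x : LGroup ι p) : Submodule ℂ (SAlg ι p c0 c1) :=
  ⨆ k : ℤ, SCompA p c0 c1 (y + k • x)

namespace LGroup

variable {ι : Type} [DecidableEq ι] {p : ι → ℕ}

theorem LRel_eq_closure_range : LRel ι p = AddSubgroup.closure (Set.range fun i =>
    (p i : ℤ) • Pi.single (some i) 1 - Pi.single (none : Option ι) 1) := by
  rw [LRel]
  congr 1
  ext
  simp [eq_comm]

theorem natCast_zsmul_egen (i : ι) : (p i : ℤ) • egen p i = cgen p := by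
  rw [egen, cgen, ← QuotientAddGroup.mk_zsmul, QuotientAddGroup.eq, ← neg_mem_iff, neg_add, neg_neg,
    LRel_eq_closure_range]
  exact AddSubgroup.subset_closure ⟨i, sub_eq_add_neg _ _⟩

theorem nsmul_egen (i : ι) : p i • egen p i = cgen p := by
  rw [← natCast_zsmul, natCast_zsmul_egen]

variable [Fintype ι]

theorem sum_zsmul_egen_add_zsmul_cgen (f : ι → ℤ) (g : ℤ) :
    ∑ j, f j • egen p j + g • cgen p =
      QuotientAddGroup.mk (∑ j, f j • Pi.single (some j) 1 + g • Pi.single none 1) := by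
  simp [egen, cgen]

theorem exists_of_sum_zsmul_add_eq {f f' : ι → ℤ} {g g' : ℤ}
    (h : ∑ j, f j • egen p j + g • cgen p = ∑ j, f' j • egen p j + g' • cgen p) :
    ∃ k : ι → ℤ, (∀ j, f' j = f j + k j * p j) ∧ g' = g - ∑ j, k j := by
  rw [sum_zsmul_egen_add_zsmul_cgen, sum_zsmul_egen_add_zsmul_cgen, QuotientAddGroup.eq,
    LRel_eq_closure_range, AddSubgroup.mem_closure_range_iff_of_fintype] at h
  obtain ⟨k, hk⟩ := h
  refine ⟨k, fun j => ?_, ?_⟩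
  · have hj : -f j + f' j = k j * p j := by
      simpa [Finset.sum_apply, Pi.single_apply] using congrFun hk (some j)
    linarith
  · have hnone : -g + g' = -∑ j, k j := by simpa [Finset.sum_apply] using congrFun hk none
    linarith

theorem nonneg_of_mem_Lplus {x : LGroup ι p} (hx : x ∈ Lplus p) {a : ι → ℕ} (ha : ∀ i, a i < p i)
    {aZ : ℤ} (hxa : x = ∑ j, a j • egen p j + aZ • cgen p) : 0 ≤ aZ := by
  obtain ⟨b, rfl⟩ := AddSubmonoid.mem_closure_range_iff_of_fintype.mp hx
  have h : ∑ j, (b j : ℤ) • egen p j + (0 : ℤ) • cgen p =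
      ∑ j, (a j : ℤ) • egen p j + aZ • cgen p := by
    simpa only [natCast_zsmul, zero_smul, add_zero] using hxa
  obtain ⟨k, hk, rfl⟩ := exists_of_sum_zsmul_add_eq h
  have hk0 : ∀ j, k j ≤ 0 := fun j => by
    have : k j * p j < 1 * p j := by linarith [hk j, ha j]
    exact Int.lt_add_one_iff.mp (lt_of_mul_lt_mul_right this (by positivity))
  linarith [Finset.sum_nonpos fun j (_ : j ∈ Finset.univ) => hk0 j]

open Finset in
theorem mul_add_card_filter_le {t : ℤ} (ht : 1 ≤ t) {a r : ι → ℕ} (hr : ∀ j, r j < p j)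
    {aZ : ℤ} {D : ℕ}
    (h : ∑ j, r j • egen p j + D • cgen p = t • (∑ j, a j • egen p j + aZ • cgen p) - cgen p) :
    t * aZ + #{j | r j < a j} ≤ D + 1 := by
  have hsum : t • ∑ j, a j • egen p j = ∑ j, t • a j • egen p j :=
    map_sum (zsmulAddGroupHom t) _ _
  have h' : ∑ j, (t * a j) • egen p j + (t * aZ - 1) • cgen p =
      ∑ j, (r j : ℤ) • egen p j + (D : ℤ) • cgen p := by
    simp only [natCast_zsmul, h, zsmul_add, hsum, mul_smul, sub_smul, one_smul]
    abel
  obtain ⟨k, hk, hD⟩ := exists_of_sum_zsmul_add_eq h'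
  have hta : ∀ j, 0 ≤ t * a j := fun j => by positivity
  have hk0 : ∀ j, k j ≤ 0 := fun j => by
    have : k j * p j < 1 * p j := by linarith [hk j, hr j, hta j]
    exact Int.lt_add_one_iff.mp (lt_of_mul_lt_mul_right this (by positivity))
  have hkF : ∀ j, r j < a j → k j ≤ -1 := fun j hj => by
    have : k j * p j < 0 * p j := by nlinarith [hk j, (Nat.cast_lt (α := ℤ)).mpr hj]
    exact Int.le_sub_one_iff.mpr (lt_of_mul_lt_mul_right this (by positivity))
  have hcard : (#{j | r j < a j} : ℤ) ≤ ∑ j, -k j := by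
    rw [natCast_card_filter]
    refine sum_le_sum fun j _ => ?_
    split_ifs with hj
    · linarith [hkF j hj]
    · linarith [hk0 j]
  rw [sum_neg_distrib] at hcard
  linarith

theorem sum_update_zero_nsmul_egen (a : ι → ℕ) (i : ι) :
    ∑ j, Function.update a i 0 j • egen p j = ∑ j, a j • egen p j - a i • egen p i := by
  rw [eq_sub_iff_add_eq, ← Finset.add_sum_erase _ _ (Finset.mem_univ i),
    ← Finset.add_sum_erase _ _ (Finset.mem_univ i), Function.update_self, zero_smul, zero_add,
    add_comm]
  congr 1
  exact Finset.sum_congr rfl fun j hj => by rw [Function.update_of_ne (Finset.ne_of_mem_erase hj)]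

theorem sum_add_ite_nsmul_egen (r : ι → ℕ) (s : Finset ι) :
    ∑ j, (r j + if j ∈ s then p j else 0) • egen p j = ∑ j, r j • egen p j + s.card • cgen p := by
  simp only [add_nsmul, Finset.sum_add_distrib, ite_smul, zero_smul, Finset.sum_ite_mem,
    Finset.univ_inter, nsmul_egen, Finset.sum_const]

end LGroup

open Finset in
theorem exists_nonempty_finset_of_mul_add_card_filter_le {ι : Type} [Fintype ι] [Nonempty ι]
    {a r : ι → ℕ} {t aZ : ℤ} {D : ℕ} (ht : 2 ≤ t) (haZ : 0 ≤ aZ)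
    (h : t * aZ + #{j | r j < a j} ≤ D + 1) :
    ∃ F : Finset ι, F.Nonempty ∧ (∀ j ∉ F, a j ≤ r j) ∧ aZ + F.card ≤ D + 1 := by
  by_cases hF : (univ.filter fun j => r j < a j).Nonempty
  · exact ⟨_, hF, fun j hj => by simpa using hj, by nlinarith⟩
  · rw [not_nonempty_iff_eq_empty] at hF
    rw [hF, card_empty] at h
    have hall : ∀ j, a j ≤ r j := by simpa using hF
    refine ⟨{Classical.arbitrary ι}, singleton_nonempty _, fun j _ => hall j, ?_⟩
    have : 2 * aZ ≤ t * aZ := by nlinarith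
    rw [card_singleton]
    omega

namespace Submodule

theorem span_pair_le_span_pair {K M : Type*} [Field K] [AddCommGroup M] [Module K M] {u v : M}
    {a b c d : K} (h : a * d ≠ b * c) :
    span K {u, v} ≤ span K {a • u + b • v, c • u + d • v} := by
  have hδ : a * d - b * c ≠ 0 := sub_ne_zero.mpr h
  have hL₁ : a • u + b • v ∈ span K {a • u + b • v, c • u + d • v} := subset_span (by simp)
  have hL₂ : c • u + d • v ∈ span K {a • u + b • v, c • u + d • v} := subset_span (by simp)
  rw [span_le]
  rintro w (rfl | rfl) <;> rw [SetLike.mem_coe, ← smul_mem_iff _ hδ]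
  · have : (a * d - b * c) • w = d • (a • w + b • v) - b • (c • w + d • v) := by module
    rw [this]
    exact sub_mem (smul_mem _ _ hL₁) (smul_mem _ _ hL₂)
  · have : (a * d - b * c) • w = a • (c • u + d • w) - c • (a • u + b • w) := by module
    rw [this]
    exact sub_mem (smul_mem _ _ hL₂) (smul_mem _ _ hL₁)

variable {R A : Type*} [CommSemiring R] [CommSemiring A] [Algebra R A]

theorem span_singleton_mul_span_singleton (a b : A) :
    span R {a} * span R {b} = span R {a * b} := by
  rw [span_mul_span, Set.singleton_mul_singleton]

/-- Partial fractions. For binary forms, `W` is the space of linear forms and the `ℓ i` are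
pairwise non-proportional linear forms. -/
theorem pow_le_iSup_span_prod_erase_mul_pow {ι : Type*} [DecidableEq ι] (W : Submodule R A)
    (ℓ : ι → A) (hℓ : Pairwise fun i j => W ≤ span R {ℓ i, ℓ j}) {F : Finset ι}
    (hF : F.Nonempty) {D : ℕ} (hD : F.card ≤ D + 1) :
    W ^ D ≤ ⨆ i ∈ F, span R {∏ j ∈ F.erase i, ℓ j} * W ^ (D + 1 - F.card) := by
  induction hF using Finset.Nonempty.cons_induction generalizing D with
  | singleton a =>
    refine le_iSup₂_of_le a (Finset.mem_singleton_self a) ?_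
    simp [← one_eq_span]
  | cons a F ha hF ih =>
    rw [Finset.card_cons] at hD ⊢
    refine (ih (by omega)).trans (iSup₂_le fun i hi => ?_)
    have hia : i ≠ a := ne_of_mem_of_not_mem hi ha
    obtain ⟨E, hE⟩ : ∃ E, D + 1 - F.card = E + 1 := ⟨D - F.card, by omega⟩
    calc span R {∏ j ∈ F.erase i, ℓ j} * W ^ (D + 1 - F.card)
        = span R {∏ j ∈ F.erase i, ℓ j} * W * W ^ E := by rw [hE, pow_succ', mul_assoc]
      _ ≤ span R {∏ j ∈ F.erase i, ℓ j} * (span R {ℓ a} ⊔ span R {ℓ i}) * W ^ E := by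
          gcongr
          rw [← span_insert]
          exact hℓ hia.symm
      _ = (span R {∏ j ∈ (F.cons a ha).erase i, ℓ j} ⊔ span R {∏ j ∈ (F.cons a ha).erase a, ℓ j})
            * W ^ E := by
          rw [mul_sup, span_singleton_mul_span_singleton, span_singleton_mul_span_singleton,
            Finset.erase_cons, Finset.prod_erase_mul _ _ hi, Finset.erase_cons_of_ne _ hia.symm,
            Finset.prod_cons, mul_comm (ℓ a)]
      _ ≤ ⨆ i ∈ F.cons a ha,
            span R {∏ j ∈ (F.cons a ha).erase i, ℓ j} * W ^ (D + 1 - (F.card + 1)) := by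
          rw [sup_mul, show D + 1 - (F.card + 1) = E by omega]
          exact sup_le (le_iSup₂_of_le i (Finset.mem_cons_of_mem hi) le_rfl)
            (le_iSup₂_of_le a (Finset.mem_cons_self a F) le_rfl)

end Submodule

namespace MvPolynomial

variable {R M σ : Type*} [CommSemiring R] [AddCommMonoid M] {w : σ → M}

theorem weightedHomogeneousSubmodule_le_of_monomial_mem {m : M}
    {P : Submodule R (MvPolynomial σ R)} (h : ∀ d, Finsupp.weight w d = m → monomial d 1 ∈ P) :
    weightedHomogeneousSubmodule R w m ≤ P := fun f hf =>
  IsWeightedHomogeneous.induction_on (motive := fun f _ => f ∈ P) P.zero_mem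
    (fun _ _ _ _ => P.add_mem)
    (fun d r hd => by simpa [smul_monomial] using P.smul_mem r (h d hd)) hf

theorem pow_le_weightedHomogeneousSubmodule {P : Submodule R (MvPolynomial σ R)} {m : M}
    (hP : P ≤ weightedHomogeneousSubmodule R w m) (k : ℕ) :
    P ^ k ≤ weightedHomogeneousSubmodule R w (k • m) := by
  induction k with
  | zero =>
    rw [pow_zero, zero_smul]
    exact Submodule.one_le.mpr (isWeightedHomogeneous_one R w)
  | succ k ih =>
    rw [pow_succ, succ_nsmul]
    exact (mul_le_mul' ih hP).trans (weightedHomogeneousSubmodule_mul w _ _)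

end MvPolynomial

section Grading

variable {ι : Type} [DecidableEq ι] (p : ι → ℕ)

def varDeg : ι ⊕ Fin 2 → LGroup ι p := Sum.elim (egen p) fun _ => cgen p

variable (ι) in
def linForms : Submodule ℂ (SPoly ι) := Submodule.span ℂ {X (Sum.inr 0), X (Sum.inr 1)}

theorem linForms_pow_le (k : ℕ) :
    linForms ι ^ k ≤ weightedHomogeneousSubmodule ℂ (varDeg p) (k • cgen p) := by
  refine pow_le_weightedHomogeneousSubmodule ?_ k
  rw [linForms, Submodule.span_le]
  rintro _ (rfl | rfl) <;> exact isWeightedHomogeneous_X ℂ _ _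

variable [Fintype ι]

theorem wtA_eq_weight (m : (ι ⊕ Fin 2) →₀ ℕ) : wtA p m = Finsupp.weight (varDeg p) m := by
  simp [wtA, Finsupp.weight_apply, Finsupp.sum_fintype, Fin.sum_univ_two, varDeg, add_smul]

theorem polyCompA_eq_weightedHomogeneousSubmodule (y : LGroup ι p) :
    polyCompA p y = weightedHomogeneousSubmodule ℂ (varDeg p) y := by
  ext f
  simp [polyCompA, IsWeightedHomogeneous, wtA_eq_weight]

def xMonomial (b : ι → ℕ) : SPoly ι := ∏ j, X (Sum.inl j) ^ b j

theorem xMonomial_mem (b : ι → ℕ) :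
    xMonomial b ∈ weightedHomogeneousSubmodule ℂ (varDeg p) (∑ j, b j • egen p j) :=
  IsWeightedHomogeneous.prod _ _ _ fun _ _ => (isWeightedHomogeneous_X ℂ _ _).pow _

theorem span_xMonomial_mul_linForms_pow_le {a b : ι → ℕ} (hab : a ≤ b) {k E : ℕ} (hk : k ≤ E) :
    Submodule.span ℂ {xMonomial b} * linForms ι ^ E ≤
      weightedHomogeneousSubmodule ℂ (varDeg p) (∑ j, a j • egen p j + k • cgen p) *
        weightedHomogeneousSubmodule ℂ (varDeg p)
          (∑ j, (b - a) j • egen p j + (E - k) • cgen p) := by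
  have hb : xMonomial b = xMonomial a * xMonomial (b - a) := by
    simp only [xMonomial, ← Finset.prod_mul_distrib, ← pow_add, Pi.sub_apply,
      Nat.add_sub_cancel' (hab _)]
  rw [hb, ← Submodule.span_singleton_mul_span_singleton, ← Nat.add_sub_cancel' hk, pow_add,
    Nat.add_sub_cancel_left, mul_mul_mul_comm]
  exact mul_le_mul'
    ((mul_le_mul' ((Submodule.span_singleton_le_iff_mem _ _).mpr (xMonomial_mem p a))
      (linForms_pow_le p k)).trans (weightedHomogeneousSubmodule_mul _ _ _))
    ((mul_le_mul' ((Submodule.span_singleton_le_iff_mem _ _).mpr (xMonomial_mem p (b - a)))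
      (linForms_pow_le p (E - k))).trans (weightedHomogeneousSubmodule_mul _ _ _))

variable (c0 c1 : ι → ℂ)

local notation "π" => AlgHom.toLinearMap (Ideal.Quotient.mkₐ ℂ (SIdl ι p c0 c1))

theorem SCompA_eq_map (y : LGroup ι p) :
    SCompA p c0 c1 y = (weightedHomogeneousSubmodule ℂ (varDeg p) y).map π := by
  rw [SCompA, polyCompA_eq_weightedHomogeneousSubmodule]

theorem map_span_xMonomial_mul_linForms_pow_le {a b : ι → ℕ} (hab : a ≤ b) {k E : ℕ}
    (hk : k ≤ E) {y₁ y₂ : LGroup ι p} (hy₁ : ∑ j, a j • egen p j + k • cgen p = y₁)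
    (hy : ∑ j, b j • egen p j + E • cgen p = y₁ + y₂) :
    (Submodule.span ℂ {xMonomial b} * linForms ι ^ E).map π ≤
      SCompA p c0 c1 y₁ * SCompA p c0 c1 y₂ := by
  have hb : ∑ j, b j • egen p j = ∑ j, a j • egen p j + ∑ j, (b - a) j • egen p j := by
    rw [← Finset.sum_add_distrib]
    exact Finset.sum_congr rfl fun j _ => by
      rw [← add_nsmul, Pi.sub_apply, Nat.add_sub_cancel' (hab j)]
  have hE : E • cgen p = k • cgen p + (E - k) • cgen p := by
    rw [← add_nsmul, Nat.add_sub_cancel' hk]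
  have hy₂ : ∑ j, (b - a) j • egen p j + (E - k) • cgen p = y₂ := by
    rw [hb, hE, ← hy₁] at hy
    exact add_left_cancel (a := ∑ j, a j • egen p j + k • cgen p) (by rw [← hy]; abel)
  rw [SCompA_eq_map, SCompA_eq_map, ← Submodule.map_mul, ← hy₁, ← hy₂]
  exact Submodule.map_mono (span_xMonomial_mul_linForms_pow_le p hab hk)

end Grading

section Reduction

variable {ι : Type} (c0 c1 : ι → ℂ)

def linForm (j : ι) : SPoly ι := C (c0 j) * X (Sum.inr 0) + C (c1 j) * X (Sum.inr 1)

theorem linForm_mem_linForms (j : ι) : linForm c0 c1 j ∈ linForms ι := by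
  rw [linForm, C_mul', C_mul']
  exact add_mem (Submodule.smul_mem _ _ (Submodule.subset_span (by simp)))
    (Submodule.smul_mem _ _ (Submodule.subset_span (by simp)))

theorem linForms_le_span_linForm_pair {i j : ι} (h : c0 i * c1 j ≠ c1 i * c0 j) :
    linForms ι ≤ Submodule.span ℂ {linForm c0 c1 i, linForm c0 c1 j} := by
  simpa only [linForms, linForm, C_mul'] using Submodule.span_pair_le_span_pair h

variable (p : ι → ℕ)

local notation "mk" => Ideal.Quotient.mk (SIdl ι p c0 c1)

theorem mk_X_pow_eq_mk_linForm (j : ι) : mk (X (Sum.inl j) ^ p j) = mk (linForm c0 c1 j) :=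
  Ideal.Quotient.eq.mpr (Ideal.subset_span ⟨j, rfl⟩)

local notation "π" => AlgHom.toLinearMap (Ideal.Quotient.mkₐ ℂ (SIdl ι p c0 c1))

variable [Fintype ι] [DecidableEq ι]

theorem mk_xMonomial_mul_prod_linForm (r : ι → ℕ) (s : Finset ι) :
    mk (xMonomial r * ∏ j ∈ s, linForm c0 c1 j) =
      mk (xMonomial fun j => r j + if j ∈ s then p j else 0) := by
  have hs : xMonomial (fun j => r j + if j ∈ s then p j else 0) =
      xMonomial r * ∏ j ∈ s, X (Sum.inl j) ^ p j := by
    simp only [xMonomial, pow_add, Finset.prod_mul_distrib, pow_ite, pow_zero,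
      Finset.prod_ite_mem, Finset.univ_inter]
  rw [hs, map_mul, map_mul, map_prod, map_prod]
  simp only [mk_X_pow_eq_mk_linForm]

theorem exists_mk_monomial_eq (hp : ∀ j, 0 < p j) (m : (ι ⊕ Fin 2) →₀ ℕ) :
    ∃ r : ι → ℕ, (∀ j, r j < p j) ∧ ∃ D : ℕ, ∃ G ∈ linForms ι ^ D,
      mk (monomial m 1) = mk (xMonomial r * G) ∧
        ∑ j, r j • egen p j + D • cgen p = Finsupp.weight (varDeg p) m := by
  set q : ι → ℕ := fun j => m (Sum.inl j) / p j
  refine ⟨fun j => m (Sum.inl j) % p j, fun j => Nat.mod_lt _ (hp j),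
    ∑ j, q j + m (Sum.inr 0) + m (Sum.inr 1),
    (∏ j, linForm c0 c1 j ^ q j) * (X (Sum.inr 0) ^ m (Sum.inr 0) * X (Sum.inr 1) ^ m (Sum.inr 1)),
    ?_, ?_, ?_⟩
  · rw [add_assoc, pow_add, pow_add]
    refine Submodule.mul_mem_mul ?_ (Submodule.mul_mem_mul (Submodule.pow_mem_pow _ ?_ _)
      (Submodule.pow_mem_pow _ ?_ _))
    · exact SetLike.prod_mem_graded (fun k => linForms ι ^ k) q _
        fun j _ => Submodule.pow_mem_pow _ (linForm_mem_linForms c0 c1 j) _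
    all_goals exact Submodule.subset_span (by simp)
  · have hX : ∀ j, mk (X (Sum.inl j)) ^ m (Sum.inl j) =
        mk (X (Sum.inl j)) ^ (m (Sum.inl j) % p j) * mk (linForm c0 c1 j) ^ q j := fun j => by
      rw [← mk_X_pow_eq_mk_linForm, ← map_pow, ← map_pow, ← map_pow, ← map_mul, ← pow_mul,
        ← pow_add, Nat.mod_add_div]
    rw [monomial_eq, C_1, one_mul, Finsupp.prod_fintype _ _ fun _ => pow_zero _,
      Fintype.prod_sum_type, Fin.prod_univ_two]
    simp only [xMonomial, map_mul, map_prod, map_pow, hX, Finset.prod_mul_distrib]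
    ring
  · have hm : ∀ j, m (Sum.inl j) • egen p j = (m (Sum.inl j) % p j) • egen p j + q j • cgen p :=
      fun j => by rw [← LGroup.nsmul_egen, smul_smul, ← add_nsmul, mul_comm, Nat.mod_add_div]
    rw [← wtA_eq_weight, wtA]
    simp only [hm, Finset.sum_add_distrib, add_nsmul, Finset.sum_smul]
    abel

theorem map_span_xMonomial_mul_prod_erase_le {x : LGroup ι p} {a r : ι → ℕ}
    (ha : ∀ j, a j < p j) {aZ : ℤ} (haZ : 0 ≤ aZ) (hx : x = ∑ j, a j • egen p j + aZ • cgen p)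
    {t : ℤ} {F : Finset ι} {i : ι} (hi : i ∈ F) (hFr : ∀ j ∉ F, a j ≤ r j) {D : ℕ}
    (hFD : aZ + F.card ≤ D + 1) (hwt : ∑ j, r j • egen p j + D • cgen p = t • x - cgen p) :
    (Submodule.span ℂ {xMonomial r * ∏ j ∈ F.erase i, linForm c0 c1 j} *
        linForms ι ^ (D + 1 - F.card)).map π ≤
      SCompA p c0 c1 (x - a i • egen p i) *
        SCompA p c0 c1 ((t - 1) • x - ((p i : ℤ) - (a i : ℤ)) • egen p i) := by
  set b : ι → ℕ := fun j => r j + if j ∈ F.erase i then p j else 0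
  have hmk : π (xMonomial r * ∏ j ∈ F.erase i, linForm c0 c1 j) = π (xMonomial b) :=
    mk_xMonomial_mul_prod_linForm c0 c1 p r (F.erase i)
  rw [Submodule.map_mul, Submodule.map_span, Set.image_singleton, hmk, ← Set.image_singleton,
    ← Submodule.map_span, ← Submodule.map_mul]
  have hF : 1 ≤ F.card := Finset.card_pos.mpr ⟨i, hi⟩
  refine map_span_xMonomial_mul_linForms_pow_le p c0 c1 (a := Function.update a i 0)
    (k := aZ.toNat) (fun j => ?_) (by omega) ?_ ?_
  · by_cases hji : j = i
    · simp [hji]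
    · by_cases hjF : j ∈ F
      · simpa [b, hji, hjF] using (ha j).le.trans (Nat.le_add_left _ _)
      · simpa [b, Function.update_of_ne hji, hjF] using hFr j hjF
  · have hk : aZ.toNat • cgen p = aZ • cgen p := by
      rw [← natCast_zsmul, Int.toNat_of_nonneg haZ]
    rw [LGroup.sum_update_zero_nsmul_egen, hx, hk]
    abel
  · rw [LGroup.sum_add_ite_nsmul_egen, add_assoc, ← add_nsmul, Finset.card_erase_of_mem hi,
      show F.card - 1 + (D + 1 - F.card) = D by omega, hwt, ← LGroup.natCast_zsmul_egen]
    simp only [sub_smul, one_smul, ← natCast_zsmul]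
    abel

end Reduction

theorem component_tx_sub_c_mem_general (n : ℕ) (hn : 1 ≤ n) (p : Fin n → ℕ)
    (c0 c1 : Fin n → ℂ)
    (hdist : ∀ i j : Fin n, i ≠ j → c0 i * c1 j ≠ c1 i * c0 j)
    (x : LGroup (Fin n) p) (hxp : x ∈ Lplus p)
    (a : Fin n → ℕ) (ha : ∀ i, a i < p i) (aZ : ℤ)
    (hxnf : x = (∑ i, a i • egen p i) + aZ • cgen p) :
    ∀ t : ℤ, 2 ≤ t →
      SCompA p c0 c1 (t • x - cgen p) ≤
        ⨆ i : Fin n, SCompA p c0 c1 (x - a i • egen p i) *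
          SCompA p c0 c1 ((t - 1) • x - ((p i : ℤ) - (a i : ℤ)) • egen p i) := by
  intro t ht
  have : Nonempty (Fin n) := ⟨⟨0, hn⟩⟩
  have haZ := LGroup.nonneg_of_mem_Lplus hxp ha hxnf
  rw [SCompA_eq_map]
  refine Submodule.map_le_iff_le_comap.mpr
    (weightedHomogeneousSubmodule_le_of_monomial_mem fun m hm => ?_)
  obtain ⟨r, hr, D, G, hG, hmk, hwt⟩ :=
    exists_mk_monomial_eq c0 c1 p (fun j => (Nat.zero_le _).trans_lt (ha j)) m
  rw [hm] at hwt
  obtain ⟨F, hF, hFr, hFD⟩ := exists_nonempty_finset_of_mul_add_card_filter_le ht haZ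
    (LGroup.mul_add_card_filter_le (by omega) hr (hxnf ▸ hwt))
  have hG' := Submodule.pow_le_iSup_span_prod_erase_mul_pow _ _
    (fun i j hij => linForms_le_span_linForm_pair c0 c1 (hdist i j hij)) hF (by omega) hG
  have key := Submodule.mul_mem_mul (Submodule.mem_span_singleton_self (xMonomial r)) hG'
  simp only [Submodule.mul_iSup, ← mul_assoc, Submodule.span_singleton_mul_span_singleton] at key
  rw [Submodule.mem_comap, AlgHom.toLinearMap_apply, Ideal.Quotient.mkₐ_eq_mk, hmk]
  exact iSup₂_le (fun i hi => Submodule.map_le_iff_le_comap.mp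
    ((map_span_xMonomial_mul_prod_erase_le c0 c1 p ha haZ hxnf hi hFr hFD hwt).trans
      (le_iSup_of_le i le_rfl))) key

/-- For `x ∈ L₊` in normal form and every `t ≥ 2`,
`S_{tx−c} ⊆ ∑ᵢ S_{x−aᵢeᵢ} · S_{(t−1)x−(pᵢ−aᵢ)eᵢ}`. -/
theorem component_tx_sub_c_mem (n : ℕ) (hn : 1 ≤ n) (p : Fin n → ℕ) (hp : ∀ i, 2 ≤ p i)
    (c0 c1 : Fin n → ℂ) (hnz : ∀ i, (c0 i, c1 i) ≠ (0, 0))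
    (hdist : ∀ i j : Fin n, i ≠ j → c0 i * c1 j ≠ c1 i * c0 j)
    (x : LGroup (Fin n) p) (hxp : x ∈ Lplus p)
    (a : Fin n → ℕ) (ha : ∀ i, a i < p i) (aZ : ℤ)
    (hxnf : x = (∑ i, a i • egen p i) + aZ • cgen p) :
    ∀ t : ℤ, 2 ≤ t →
      SCompA p c0 c1 (t • x - cgen p) ≤
        ⨆ i : Fin n, SCompA p c0 c1 (x - a i • egen p i) *
          SCompA p c0 c1 ((t - 1) • x - ((p i : ℤ) - (a i : ℤ)) • egen p i) :=
  component_tx_sub_c_mem_general n hn p c0 c1 hdist x hxp a ha aZ hxnf
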